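/- Variance lower bound and expansivity of M: for every φ > 0 one has Var_{ν¹_φ}(η) ≥ φ/g*, and consequently |M(φ₁) − M(φ₂)| ≥ |φ₁ − φ₂|/g* for all φ₁, φ₂ ≥ 0; in particular, the inverse function Φ := M⁻¹ is Lipschitz continuous with Lipschitz constant g* on the range of M. -/

import Mathlib

/-! The recursion `g(n+1) ν¹_φ(n+1) = φ ν¹_φ(n)` gives `E[g(η)] = φ` and
`E[η g(η)] = φ (M(φ) + 1)`. Since `n ↦ g* n − g(n)` is nondecreasing, Chebyshev's association
inequality makes its covariance with `η` nonnegative, and that covariance is `g* Var − φ`.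
Differentiating the power series gives `M'(φ) = Var/φ ≥ 1/g*`, so `φ ↦ M(φ) − φ/g*` is
nondecreasing on `[0, ∞)`; this is the expansivity of `M`, and it makes `M⁻¹` `g*`-Lipschitz. -/

open scoped BigOperators

/-- The "generalized factorial" `g(n)! = g(1)·g(2)···g(n)`, with `g(0)! = 1`. -/
noncomputable def gfact (g : ℕ → ℝ) (n : ℕ) : ℝ := ∏ i ∈ Finset.Icc 1 n, g i

/-- The partition function `Z(φ) = Σ_{n≥0} φⁿ/g(n)!`. -/
noncomputable def Zfun (g : ℕ → ℝ) (φ : ℝ) : ℝ := ∑' n : ℕ, φ ^ n / gfact g n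

/-- The one-site marginal `ν¹_φ(n) = φⁿ/(Z(φ)·g(n)!)`. -/
noncomputable def nu1 (g : ℕ → ℝ) (φ : ℝ) (n : ℕ) : ℝ := φ ^ n / (Zfun g φ * gfact g n)

/-- The mean density `M(φ) = Σ_{n≥0} n·ν¹_φ(n)`. -/
noncomputable def Mfun (g : ℕ → ℝ) (φ : ℝ) : ℝ := ∑' n : ℕ, (n : ℝ) * nu1 g φ n

/-- The variance of the one-site marginal, `Var_{ν¹_φ}(η) = Σ_n n²·ν¹_φ(n) − M(φ)²`. -/
noncomputable def Varfun (g : ℕ → ℝ) (φ : ℝ) : ℝ :=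
  (∑' n : ℕ, (n : ℝ) ^ 2 * nu1 g φ n) - (Mfun g φ) ^ 2

section GeneralizedFactorial

variable {g : ℕ → ℝ} {g₀ : ℝ}

@[simp]
lemma gfact_zero : gfact g 0 = 1 := by simp [gfact]

lemma gfact_succ (n : ℕ) : gfact g (n + 1) = gfact g n * g (n + 1) :=
  Finset.prod_Icc_succ_top (by omega) _

lemma pow_mul_factorial_le_gfact (hg₀ : 0 ≤ g₀) (hlin : ∀ n, g₀ * n ≤ g n) (n : ℕ) :
    g₀ ^ n * n.factorial ≤ gfact g n := by
  induction n with
  | zero => simp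
  | succ n ih =>
    have hstep : g₀ * (n + 1 : ℕ) ≤ g (n + 1) := hlin (n + 1)
    calc g₀ ^ (n + 1) * (n + 1).factorial = g₀ ^ n * n.factorial * (g₀ * (n + 1 : ℕ)) := by
          push_cast [Nat.factorial_succ]; ring
      _ ≤ gfact g n * g (n + 1) :=
          mul_le_mul ih hstep (by positivity) ((by positivity : (0 : ℝ) ≤ _).trans ih)
      _ = gfact g (n + 1) := (gfact_succ n).symm

lemma gfact_pos (hg₀ : 0 < g₀) (hlin : ∀ n, g₀ * n ≤ g n) (n : ℕ) : 0 < gfact g n :=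
  (by positivity : 0 < g₀ ^ n * n.factorial).trans_le (pow_mul_factorial_le_gfact hg₀.le hlin n)

lemma g_succ_pos (hg₀ : 0 < g₀) (hlin : ∀ n, g₀ * n ≤ g n) (n : ℕ) : 0 < g (n + 1) :=
  (by positivity : 0 < g₀ * (n + 1 : ℕ)).trans_le (hlin (n + 1))

end GeneralizedFactorial

/-- `momentSeries g k φ = Z(φ) · E_{ν¹_φ}[ηᵏ]`. -/
noncomputable def momentSeries (g : ℕ → ℝ) (k : ℕ) (x : ℝ) : ℝ :=
  ∑' n : ℕ, (n : ℝ) ^ k * x ^ n / gfact g n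

section MomentSeries

variable {g : ℕ → ℝ} {g₀ : ℝ}

lemma summable_momentSeries (hg₀ : 0 < g₀) (hlin : ∀ n, g₀ * n ≤ g n) (k : ℕ) {x : ℝ}
    (hx : 0 ≤ x) : Summable fun n : ℕ => (n : ℝ) ^ k * x ^ n / gfact g n := by
  refine Summable.of_nonneg_of_le (fun n => ?_) (fun n => ?_)
    (Real.summable_pow_div_factorial (2 ^ k * x / g₀))
  · have := gfact_pos hg₀ hlin n
    positivity
  · have hn : (n : ℝ) ^ k ≤ (2 ^ k) ^ n := by
      rw [← pow_mul, mul_comm, pow_mul]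
      exact pow_le_pow_left₀ n.cast_nonneg (by exact_mod_cast Nat.lt_two_pow_self.le) k
    calc (n : ℝ) ^ k * x ^ n / gfact g n ≤ (2 ^ k) ^ n * x ^ n / (g₀ ^ n * n.factorial) := by
          gcongr
          exact pow_mul_factorial_le_gfact hg₀.le hlin n
      _ = (2 ^ k * x / g₀) ^ n / n.factorial := by
          rw [div_pow, mul_pow, div_div]

lemma hasDerivAt_momentSeries (hg₀ : 0 < g₀) (hlin : ∀ n, g₀ * n ≤ g n) (k : ℕ) (x : ℝ) :
    HasDerivAt (momentSeries g k) (∑' n : ℕ, (n : ℝ) ^ (k + 1) * x ^ (n - 1) / gfact g n) x := by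
  set R := |x| + 1
  have hR : 1 ≤ R := le_add_of_nonneg_left (abs_nonneg x)
  have hxR : x ∈ Set.Ioo (-R) R := abs_lt.mp (lt_add_one _)
  have h0R : (0 : ℝ) ∈ Set.Ioo (-R) R := ⟨by linarith, by linarith⟩
  refine hasDerivAt_tsum_of_isPreconnected
    (g := fun (n : ℕ) (y : ℝ) => (n : ℝ) ^ k * y ^ n / gfact g n)
    (g' := fun (n : ℕ) (y : ℝ) => (n : ℝ) ^ (k + 1) * y ^ (n - 1) / gfact g n)
    (summable_momentSeries hg₀ hlin (k + 1) (zero_le_one.trans hR)) isOpen_Ioo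
    isPreconnected_Ioo (fun n y _ => ?_) (fun n y hy => ?_) h0R
    (summable_momentSeries hg₀ hlin k le_rfl) hxR
  · exact (((hasDerivAt_pow n y).const_mul _).div_const _).congr_deriv (by ring)
  · have hG := gfact_pos hg₀ hlin n
    have hy' : |y| ≤ R := abs_le.mpr ⟨hy.1.le, hy.2.le⟩
    rw [Real.norm_eq_abs, abs_div, abs_mul, abs_pow, abs_pow, Nat.abs_cast, abs_of_pos hG]
    gcongr
    calc |y| ^ (n - 1) ≤ R ^ (n - 1) := by gcongr
      _ ≤ R ^ n := pow_le_pow_right₀ hR (Nat.sub_le n 1)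

lemma mul_tsum_pow_pred (g : ℕ → ℝ) (k : ℕ) (x : ℝ) :
    x * ∑' n : ℕ, (n : ℝ) ^ (k + 1) * x ^ (n - 1) / gfact g n = momentSeries g (k + 1) x := by
  rw [← tsum_mul_left, momentSeries]
  refine tsum_congr fun n => ?_
  cases n with
  | zero => simp
  | succ n => rw [Nat.add_sub_cancel, pow_succ x n]; ring

lemma hasDerivAt_momentSeries_of_ne_zero (hg₀ : 0 < g₀) (hlin : ∀ n, g₀ * n ≤ g n) (k : ℕ)
    {x : ℝ} (hx : x ≠ 0) :
    HasDerivAt (momentSeries g k) (momentSeries g (k + 1) x / x) x := by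
  rw [← mul_tsum_pow_pred, mul_div_cancel_left₀ _ hx]
  exact hasDerivAt_momentSeries hg₀ hlin k x

end MomentSeries

section Marginal

variable {g : ℕ → ℝ} {g₀ φ : ℝ}

lemma Zfun_eq_momentSeries_zero (g : ℕ → ℝ) : Zfun g = momentSeries g 0 := by
  funext φ
  simp [Zfun, momentSeries]

lemma pow_mul_nu1 (g : ℕ → ℝ) (k : ℕ) (φ : ℝ) (n : ℕ) :
    (n : ℝ) ^ k * nu1 g φ n = (n : ℝ) ^ k * φ ^ n / gfact g n / Zfun g φ := by
  rw [nu1]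
  ring

lemma tsum_pow_mul_nu1 (g : ℕ → ℝ) (k : ℕ) (φ : ℝ) :
    ∑' n : ℕ, (n : ℝ) ^ k * nu1 g φ n = momentSeries g k φ / Zfun g φ := by
  simp only [pow_mul_nu1, tsum_div_const, momentSeries]

lemma Mfun_eq_div (g : ℕ → ℝ) (φ : ℝ) :
    Mfun g φ = momentSeries g 1 φ / momentSeries g 0 φ := by
  rw [← Zfun_eq_momentSeries_zero, ← tsum_pow_mul_nu1, Mfun]
  simp only [pow_one]

lemma Varfun_eq_div (g : ℕ → ℝ) (φ : ℝ) :
    Varfun g φ = momentSeries g 2 φ / momentSeries g 0 φ -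
      (momentSeries g 1 φ / momentSeries g 0 φ) ^ 2 := by
  rw [Varfun, tsum_pow_mul_nu1, Mfun_eq_div, Zfun_eq_momentSeries_zero]

lemma one_le_Zfun (hg₀ : 0 < g₀) (hlin : ∀ n, g₀ * n ≤ g n) (hφ : 0 ≤ φ) : 1 ≤ Zfun g φ := by
  rw [Zfun_eq_momentSeries_zero]
  calc (1 : ℝ) = (0 : ℕ) ^ 0 * φ ^ 0 / gfact g 0 := by simp
    _ ≤ momentSeries g 0 φ := (summable_momentSeries hg₀ hlin 0 hφ).le_tsum 0 fun n _ => by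
        have := gfact_pos hg₀ hlin n
        positivity

lemma nu1_nonneg (hg₀ : 0 < g₀) (hlin : ∀ n, g₀ * n ≤ g n) (hφ : 0 ≤ φ) (n : ℕ) :
    0 ≤ nu1 g φ n := by
  have := gfact_pos hg₀ hlin n
  have := one_le_Zfun hg₀ hlin hφ
  rw [nu1]
  positivity

lemma summable_pow_mul_nu1 (hg₀ : 0 < g₀) (hlin : ∀ n, g₀ * n ≤ g n) (hφ : 0 ≤ φ) (k : ℕ) :
    Summable fun n : ℕ => (n : ℝ) ^ k * nu1 g φ n := by
  simp only [pow_mul_nu1]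
  exact (summable_momentSeries hg₀ hlin k hφ).div_const _

lemma hasSum_nu1 (hg₀ : 0 < g₀) (hlin : ∀ n, g₀ * n ≤ g n) (hφ : 0 ≤ φ) :
    HasSum (nu1 g φ) 1 := by
  have h := (summable_pow_mul_nu1 hg₀ hlin hφ 0).hasSum
  rw [tsum_pow_mul_nu1, ← Zfun_eq_momentSeries_zero,
    div_self (zero_lt_one.trans_le (one_le_Zfun hg₀ hlin hφ)).ne'] at h
  simpa using h

lemma hasSum_mul_nu1 (hg₀ : 0 < g₀) (hlin : ∀ n, g₀ * n ≤ g n) (hφ : 0 ≤ φ) :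
    HasSum (fun n : ℕ => (n : ℝ) * nu1 g φ n) (Mfun g φ) := by
  have h := (summable_pow_mul_nu1 hg₀ hlin hφ 1).hasSum
  simp only [pow_one] at h
  exact h

lemma g_succ_mul_nu1_succ (g : ℕ → ℝ) (φ : ℝ) {n : ℕ} (hg : g (n + 1) ≠ 0) :
    g (n + 1) * nu1 g φ (n + 1) = φ * nu1 g φ n := by
  rw [nu1, nu1, gfact_succ, pow_succ]
  field_simp

lemma hasSum_g_mul_nu1 (hg₀ : 0 < g₀) (hlin : ∀ n, g₀ * n ≤ g n) (hgzero : g 0 = 0)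
    (hφ : 0 ≤ φ) : HasSum (fun n : ℕ => g n * nu1 g φ n) φ := by
  have hrec (n : ℕ) : g (n + 1) * nu1 g φ (n + 1) = φ * nu1 g φ n :=
    g_succ_mul_nu1_succ g φ (g_succ_pos hg₀ hlin n).ne'
  have h := HasSum.zero_add (f := fun n => g n * nu1 g φ n)
    (((hasSum_nu1 hg₀ hlin hφ).mul_left φ).congr_fun hrec)
  rwa [hgzero, zero_mul, zero_add, mul_one] at h

lemma hasSum_mul_g_mul_nu1 (hg₀ : 0 < g₀) (hlin : ∀ n, g₀ * n ≤ g n) (hφ : 0 ≤ φ) :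
    HasSum (fun n : ℕ => n * g n * nu1 g φ n) (φ * (Mfun g φ + 1)) := by
  have hrec (n : ℕ) : ((n + 1 : ℕ) : ℝ) * g (n + 1) * nu1 g φ (n + 1) =
      φ * (n * nu1 g φ n) + φ * nu1 g φ n := by
    rw [mul_assoc, g_succ_mul_nu1_succ g φ (g_succ_pos hg₀ hlin n).ne']
    push_cast
    ring
  have h := HasSum.zero_add (f := fun n : ℕ => n * g n * nu1 g φ n)
    ((((hasSum_mul_nu1 hg₀ hlin hφ).mul_left φ).add
      ((hasSum_nu1 hg₀ hlin hφ).mul_left φ)).congr_fun hrec)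
  rwa [Nat.cast_zero, zero_mul, zero_mul, zero_add, ← mul_add] at h

end Marginal

/-- Chebyshev's association inequality for a probability weight `p` on `ℕ`. -/
lemma Monotone.mean_mul_le_of_hasSum {p H : ℕ → ℝ} {m a b : ℝ} (hH : Monotone H)
    (hp : ∀ n, 0 ≤ p n) (hp₁ : HasSum p 1) (hm : HasSum (fun n : ℕ => n * p n) m)
    (ha : HasSum (fun n => H n * p n) a) (hb : HasSum (fun n : ℕ => n * H n * p n) b) :
    m * a ≤ b := by
  set k := ⌊m⌋₊
  have hm₀ : 0 ≤ m := hm.nonneg fun n => mul_nonneg n.cast_nonneg (hp n)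
  -- `n ↦ n - m` and `n ↦ H n - H ⌊m⌋₊` change sign at the same place
  have hterm (n : ℕ) : 0 ≤ (n - m) * (H n - H k) * p n := by
    refine mul_nonneg ?_ (hp n)
    rcases le_or_gt n k with hn | hn
    · exact mul_nonneg_of_nonpos_of_nonpos
        (sub_nonpos.mpr ((Nat.cast_le.mpr hn).trans (Nat.floor_le hm₀)))
        (sub_nonpos.mpr (hH hn))
    · have hmn : m ≤ n := (Nat.lt_floor_add_one m).le.trans (by exact_mod_cast hn)
      exact mul_nonneg (sub_nonneg.mpr hmn) (sub_nonneg.mpr (hH hn.le))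
  have hsum : HasSum (fun n : ℕ => (n - m) * (H n - H k) * p n)
      (b - m * a - H k * m + m * H k * 1) :=
    (((hb.sub (ha.mul_left m)).sub (hm.mul_left (H k))).add (hp₁.mul_left (m * H k))).congr_fun
      fun n => by ring
  linarith [hsum.nonneg hterm]

lemma le_mul_Varfun {g : ℕ → ℝ} {g₀ gstar φ : ℝ} (hg₀ : 0 < g₀) (hlin : ∀ n, g₀ * n ≤ g n)
    (hgzero : g 0 = 0) (hstep : ∀ n, g (n + 1) - g n ≤ gstar) (hφ : 0 ≤ φ) :
    φ ≤ gstar * Varfun g φ := by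
  have hH : Monotone fun n : ℕ => gstar * n - g n :=
    monotone_nat_of_le_succ fun n => by push_cast; linarith [hstep n]
  have hM := hasSum_mul_nu1 hg₀ hlin hφ
  have hS := (summable_pow_mul_nu1 hg₀ hlin hφ 2).hasSum
  have key := hH.mean_mul_le_of_hasSum (nu1_nonneg hg₀ hlin hφ) (hasSum_nu1 hg₀ hlin hφ) hM
    (((hM.mul_left gstar).sub (hasSum_g_mul_nu1 hg₀ hlin hgzero hφ)).congr_fun fun n => by ring)
    (((hS.mul_left gstar).sub (hasSum_mul_g_mul_nu1 hg₀ hlin hφ)).congr_fun fun n => by ring)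
  rw [Varfun]
  linear_combination key

section MeanDensity

variable {g : ℕ → ℝ} {g₀ : ℝ}

lemma momentSeries_zero_ne_zero (hg₀ : 0 < g₀) (hlin : ∀ n, g₀ * n ≤ g n) {x : ℝ} (hx : 0 ≤ x) :
    momentSeries g 0 x ≠ 0 := by
  rw [← Zfun_eq_momentSeries_zero]
  exact (zero_lt_one.trans_le (one_le_Zfun hg₀ hlin hx)).ne'

lemma differentiableAt_Mfun (hg₀ : 0 < g₀) (hlin : ∀ n, g₀ * n ≤ g n) {x : ℝ} (hx : 0 ≤ x) :
    DifferentiableAt ℝ (Mfun g) x := by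
  rw [funext (Mfun_eq_div g)]
  exact ((hasDerivAt_momentSeries hg₀ hlin 1 x).div (hasDerivAt_momentSeries hg₀ hlin 0 x)
    (momentSeries_zero_ne_zero hg₀ hlin hx)).differentiableAt

lemma hasDerivAt_Mfun (hg₀ : 0 < g₀) (hlin : ∀ n, g₀ * n ≤ g n) {x : ℝ} (hx : 0 < x) :
    HasDerivAt (Mfun g) (Varfun g x / x) x := by
  have hZ := momentSeries_zero_ne_zero hg₀ hlin hx.le
  rw [funext (Mfun_eq_div g)]
  refine ((hasDerivAt_momentSeries_of_ne_zero hg₀ hlin 1 hx.ne').div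
    (hasDerivAt_momentSeries_of_ne_zero hg₀ hlin 0 hx.ne') hZ).congr_deriv ?_
  rw [Varfun_eq_div]
  field_simp

lemma monotoneOn_Mfun_sub_div (hg₀ : 0 < g₀) (hlin : ∀ n, g₀ * n ≤ g n) {c : ℝ} (hc : 0 < c)
    (hvar : ∀ x, 0 < x → x ≤ c * Varfun g x) :
    MonotoneOn (fun x => Mfun g x - x / c) (Set.Ici 0) := by
  have hderiv {x : ℝ} (hx : 0 < x) :
      HasDerivAt (fun x => Mfun g x - x / c) (Varfun g x / x - 1 / c) x :=
    (hasDerivAt_Mfun hg₀ hlin hx).sub ((hasDerivAt_id x).div_const c)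
  refine monotoneOn_of_deriv_nonneg (convex_Ici 0) (fun x hx => ?_) (fun x hx => ?_)
    (fun x hx => ?_)
  · exact ((differentiableAt_Mfun hg₀ hlin hx).sub
      (differentiableAt_id.div_const c)).continuousAt.continuousWithinAt
  · rw [interior_Ici] at hx
    exact (hderiv hx).differentiableAt.differentiableWithinAt
  · rw [interior_Ici] at hx
    rw [(hderiv hx).deriv, sub_nonneg, div_le_div_iff₀ hc hx, one_mul, mul_comm]
    exact hvar x hx

lemma abs_sub_div_le_abs_Mfun_sub (hg₀ : 0 < g₀) (hlin : ∀ n, g₀ * n ≤ g n) {c : ℝ} (hc : 0 < c)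
    (hvar : ∀ x, 0 < x → x ≤ c * Varfun g x) {a b : ℝ} (ha : 0 ≤ a) (hb : 0 ≤ b) :
    |a - b| / c ≤ |Mfun g a - Mfun g b| := by
  wlog hba : b ≤ a generalizing a b
  · rw [abs_sub_comm, abs_sub_comm (Mfun g a)]
    exact this hb ha (le_of_not_ge hba)
  have h := monotoneOn_Mfun_sub_div hg₀ hlin hc hvar hb ha hba
  rw [abs_of_nonneg (sub_nonneg.mpr hba), sub_div]
  exact le_abs.mpr (Or.inl (by linarith))

end MeanDensity

lemma dist_invFunOn_le {α β : Type*} [Nonempty α] [PseudoMetricSpace α] [PseudoMetricSpace β]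
    {f : α → β} {s : Set α} {c : ℝ} (hf : ∀ x ∈ s, ∀ y ∈ s, dist x y ≤ c * dist (f x) (f y))
    {y₁ y₂ : β} (h₁ : y₁ ∈ f '' s) (h₂ : y₂ ∈ f '' s) :
    dist (Function.invFunOn f s y₁) (Function.invFunOn f s y₂) ≤ c * dist y₁ y₂ := by
  simpa only [Function.invFunOn_eq h₁, Function.invFunOn_eq h₂]
    using hf _ (Function.invFunOn_mem h₁) _ (Function.invFunOn_mem h₂)

theorem variance_lower_bound_and_expansivity_general
    (g : ℕ → ℝ) (g₀ gstar : ℝ) (hg₀ : 0 < g₀) (hgs : g₀ ≤ gstar)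
    (hgzero : g 0 = 0)
    (hLip : ∀ n, |g (n + 1) - g n| ≤ gstar)
    (hlin : ∀ n, g₀ * n ≤ g n) :
    (∀ φ : ℝ, 0 < φ → φ / gstar ≤ Varfun g φ) ∧
      (∀ φ₁ φ₂ : ℝ, 0 ≤ φ₁ → 0 ≤ φ₂ →
        |φ₁ - φ₂| / gstar ≤ |Mfun g φ₁ - Mfun g φ₂|) ∧
      (∀ ρ₁ ∈ Mfun g '' Set.Ici (0 : ℝ), ∀ ρ₂ ∈ Mfun g '' Set.Ici (0 : ℝ),
        |Function.invFunOn (Mfun g) (Set.Ici 0) ρ₁ -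
            Function.invFunOn (Mfun g) (Set.Ici 0) ρ₂| ≤ gstar * |ρ₁ - ρ₂|) := by
  have hgstar : 0 < gstar := hg₀.trans_le hgs
  have hvar (φ : ℝ) (hφ : 0 < φ) : φ ≤ gstar * Varfun g φ :=
    le_mul_Varfun hg₀ hlin hgzero (fun n => (abs_le.mp (hLip n)).2) hφ.le
  have hexp (φ₁ φ₂ : ℝ) (h₁ : 0 ≤ φ₁) (h₂ : 0 ≤ φ₂) :
      |φ₁ - φ₂| / gstar ≤ |Mfun g φ₁ - Mfun g φ₂| :=
    abs_sub_div_le_abs_Mfun_sub hg₀ hlin hgstar hvar h₁ h₂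
  refine ⟨fun φ hφ => (div_le_iff₀' hgstar).mpr (hvar φ hφ), hexp, fun ρ₁ h₁ ρ₂ h₂ => ?_⟩
  simpa only [Real.dist_eq] using dist_invFunOn_le (s := Set.Ici 0) (fun x hx y hy =>
    (div_le_iff₀' hgstar).mp (hexp x y hx hy)) h₁ h₂

/-- Variance lower bound and expansivity of `M`: for every `φ > 0`,
`Var_{ν¹_φ}(η) ≥ φ/g*`; consequently `|M(φ₁) − M(φ₂)| ≥ |φ₁ − φ₂|/g*` for all
`φ₁, φ₂ ≥ 0`; in particular the inverse function `Φ = M⁻¹` is Lipschitz with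
constant `g*` on the range of `M` (over `[0,∞)`). -/
theorem variance_lower_bound_and_expansivity
    (g : ℕ → ℝ) (g₀ gstar : ℝ) (hg₀ : 0 < g₀) (hgs : g₀ ≤ gstar)
    (hgzero : g 0 = 0) (hgpos : ∀ n, 1 ≤ n → 0 < g n)
    (hLip : ∀ n, |g (n + 1) - g n| ≤ gstar)
    (hlin : ∀ n, g₀ * n ≤ g n) :
    (∀ φ : ℝ, 0 < φ → φ / gstar ≤ Varfun g φ) ∧
      (∀ φ₁ φ₂ : ℝ, 0 ≤ φ₁ → 0 ≤ φ₂ →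
        |φ₁ - φ₂| / gstar ≤ |Mfun g φ₁ - Mfun g φ₂|) ∧
      (∀ ρ₁ ∈ Mfun g '' Set.Ici (0 : ℝ), ∀ ρ₂ ∈ Mfun g '' Set.Ici (0 : ℝ),
        |Function.invFunOn (Mfun g) (Set.Ici 0) ρ₁ -
            Function.invFunOn (Mfun g) (Set.Ici 0) ρ₂| ≤ gstar * |ρ₁ - ρ₂|) :=
  variance_lower_bound_and_expansivity_general g g₀ gstar hg₀ hgs hgzero hLip hlin
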